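/- For every n×n complex matrix X and every index i (1 ≤ i ≤ n), the i-th largest singular value of X is greater than or equal to the i-th largest eigenvalue of the Hermitian matrix Re X. (Fan–Hoffman.) -/

import Mathlib

open Matrix Submodule
open scoped InnerProductSpace
open scoped ComplexOrder

noncomputable section

/-- `Re X = (X + Xᴴ)/2`. -/
def matRe {m : Type*} (X : Matrix m m ℂ) : Matrix m m ℂ := (2⁻¹ : ℂ) • (X + Xᴴ)

lemma matRe_isHermitian {m : Type*} [Fintype m] (X : Matrix m m ℂ) :
    (matRe X).IsHermitian := by
  unfold matRe Matrix.IsHermitian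
  rw [conjTranspose_smul, conjTranspose_add, conjTranspose_conjTranspose]
  simp [add_comm]

/-- The singular values of `X` (unsorted): the square roots of the eigenvalues of `X Xᴴ`. -/
def singVals {n : ℕ} (X : Matrix (Fin n) (Fin n) ℂ) : Fin n → ℝ := fun i =>
  Real.sqrt ((Matrix.posSemidef_self_mul_conjTranspose X).isHermitian.eigenvalues i)

/-- `sortedDesc v i` is the `i`-th largest value of the tuple `v` (counting from `i = 0`). -/
def sortedDesc {n : ℕ} (v : Fin n → ℝ) : Fin n → ℝ := fun i => (v ∘ Tuple.sort v) i.rev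

section Aux

variable {n : ℕ} {A : Matrix (Fin n) (Fin n) ℂ}

lemma repr_mulVec (hA : A.IsHermitian) (x : EuclideanSpace ℂ (Fin n)) (j : Fin n) :
    hA.eigenvectorBasis.repr ((WithLp.equiv 2 (Fin n → ℂ)).symm (A *ᵥ ⇑x)) j
      = (hA.eigenvalues j : ℂ) * hA.eigenvectorBasis.repr x j := by
  rw [OrthonormalBasis.repr_apply_apply, OrthonormalBasis.repr_apply_apply,
    EuclideanSpace.inner_eq_star_dotProduct, EuclideanSpace.inner_eq_star_dotProduct]
  have h1 : star ((WithLp.equiv 2 (Fin n → ℂ)) (hA.eigenvectorBasis j)) ⬝ᵥ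
      ((WithLp.equiv 2 (Fin n → ℂ)) ((WithLp.equiv 2 (Fin n → ℂ)).symm (A *ᵥ ⇑x)))
      = star ⇑(hA.eigenvectorBasis j) ⬝ᵥ (A *ᵥ ⇑x) := rfl
  rw [dotProduct_comm, dotProduct_comm x.ofLp]
  change star ⇑(hA.eigenvectorBasis j) ⬝ᵥ (A *ᵥ ⇑x) = _
  have h2 : star ⇑(hA.eigenvectorBasis j) ⬝ᵥ (A *ᵥ ⇑x)
      = star (Aᴴ *ᵥ ⇑(hA.eigenvectorBasis j)) ⬝ᵥ ⇑x := by
    rw [star_mulVec, conjTranspose_conjTranspose, dotProduct_mulVec]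
  rw [h2, hA.eq, hA.mulVec_eigenvectorBasis]
  simp [dotProduct, mul_comm, mul_assoc, Finset.mul_sum, mul_left_comm]

lemma quadForm (hA : A.IsHermitian) (x : EuclideanSpace ℂ (Fin n)) :
    ⟪x, (WithLp.equiv 2 (Fin n → ℂ)).symm (A *ᵥ ⇑x)⟫_ℂ
      = ((∑ j, hA.eigenvalues j * ‖hA.eigenvectorBasis.repr x j‖ ^ 2 : ℝ) : ℂ) := by
  set b := hA.eigenvectorBasis
  set y := (WithLp.equiv 2 (Fin n → ℂ)).symm (A *ᵥ ⇑x)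
  rw [← b.repr.inner_map_map x y]
  rw [PiLp.inner_apply]
  push_cast
  refine Finset.sum_congr rfl fun j _ => ?_
  rw [RCLike.inner_apply, repr_mulVec hA x j]
  rw [show ((‖b.repr x j‖ : ℂ)^2) = (starRingEnd ℂ) (b.repr x j) * (b.repr x j) by
    rw [← Complex.normSq_eq_conj_mul_self]; norm_cast; rw [← Complex.sq_norm]]
  ring

lemma norm_sq_eq_sum (hA : A.IsHermitian) (x : EuclideanSpace ℂ (Fin n)) :
    ‖x‖ ^ 2 = ∑ j, ‖hA.eigenvectorBasis.repr x j‖ ^ 2 := by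
  rw [← hA.eigenvectorBasis.repr.norm_map x, EuclideanSpace.norm_eq,
    Real.sq_sqrt (by positivity)]

lemma repr_eq_zero_of_not_mem (hA : A.IsHermitian) (J : Finset (Fin n))
    (x : EuclideanSpace ℂ (Fin n))
    (hx : x ∈ span ℂ (⇑hA.eigenvectorBasis '' ↑J)) {j : Fin n} (hj : j ∉ J) :
    hA.eigenvectorBasis.repr x j = 0 := by
  rw [← hA.eigenvectorBasis.coe_toBasis] at hx
  rw [Module.Basis.mem_span_image] at hx
  rw [← hA.eigenvectorBasis.coe_toBasis_repr_apply]
  by_contra h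
  exact hj (hx (Finsupp.mem_support_iff.2 h))

lemma sum_lower (hA : A.IsHermitian) (J : Finset (Fin n)) (c : ℝ)
    (hJ : ∀ j ∈ J, c ≤ hA.eigenvalues j) (x : EuclideanSpace ℂ (Fin n))
    (hx : x ∈ span ℂ (⇑hA.eigenvectorBasis '' ↑J)) :
    c * ‖x‖ ^ 2 ≤ ∑ j, hA.eigenvalues j * ‖hA.eigenvectorBasis.repr x j‖ ^ 2 := by
  rw [norm_sq_eq_sum hA x, Finset.mul_sum]
  refine Finset.sum_le_sum fun j _ => ?_
  by_cases hj : j ∈ J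
  · exact mul_le_mul_of_nonneg_right (hJ j hj) (by positivity)
  · rw [repr_eq_zero_of_not_mem hA J x hx hj]; simp

lemma sum_upper (hA : A.IsHermitian) (J : Finset (Fin n)) (c : ℝ)
    (hJ : ∀ j ∈ J, hA.eigenvalues j ≤ c) (x : EuclideanSpace ℂ (Fin n))
    (hx : x ∈ span ℂ (⇑hA.eigenvectorBasis '' ↑J)) :
    ∑ j, hA.eigenvalues j * ‖hA.eigenvectorBasis.repr x j‖ ^ 2 ≤ c * ‖x‖ ^ 2 := by
  rw [norm_sq_eq_sum hA x, Finset.mul_sum]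
  refine Finset.sum_le_sum fun j _ => ?_
  by_cases hj : j ∈ J
  · exact mul_le_mul_of_nonneg_right (hJ j hj) (by positivity)
  · rw [repr_eq_zero_of_not_mem hA J x hx hj]; simp

lemma finrank_span_eigen (hA : A.IsHermitian) (J : Finset (Fin n)) :
    Module.finrank ℂ (span ℂ (⇑hA.eigenvectorBasis '' ↑J)) = J.card := by
  have hli : LinearIndependent ℂ (fun j : (J : Set (Fin n)) => hA.eigenvectorBasis j) :=
    (hA.eigenvectorBasis.orthonormal.linearIndependent).comp _ Subtype.val_injective
  have := finrank_span_eq_card hli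
  have hr : (Set.range fun j : (J : Set (Fin n)) => hA.eigenvectorBasis j)
      = ⇑hA.eigenvectorBasis '' ↑J := by
    ext v; simp [Set.mem_image]
  rw [hr] at this
  simpa using this

lemma sortedDesc_le_of_rev_le {v : Fin n → ℝ} {i k : Fin n} (h : i.rev ≤ k) :
    (fun i => (v ∘ Tuple.sort v) i.rev) i ≤ v (Tuple.sort v k) :=
  Tuple.monotone_sort v h

lemma le_sortedDesc_of_le_rev {v : Fin n → ℝ} {i k : Fin n} (h : k ≤ i.rev) :
    v (Tuple.sort v k) ≤ (fun i => (v ∘ Tuple.sort v) i.rev) i :=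
  Tuple.monotone_sort v h

example (m : ℕ) (i : Fin m) : (Finset.Ici i.rev).card = i.val + 1 := by
  rw [Fin.card_Ici]
  have := i.isLt
  simp [Fin.rev]
  omega

example (m : ℕ) (i : Fin m) : (Finset.Iic i.rev).card = m - i.val := by
  rw [Fin.card_Iic]
  have := i.isLt
  simp [Fin.rev]
  omega

end Aux

/-- **Fan–Hoffman.** For every `n×n` complex matrix `X` and every index `i`, the `i`-th
largest singular value of `X` is at least the `i`-th largest eigenvalue of the Hermitian
matrix `Re X = (X + Xᴴ)/2`. -/
theorem stmt1 {n : ℕ} (X : Matrix (Fin n) (Fin n) ℂ) (i : Fin n) :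
    sortedDesc ((matRe_isHermitian X).eigenvalues) i ≤ sortedDesc (singVals X) i := by
  classical
  have hA := matRe_isHermitian X
  have hB := (Matrix.posSemidef_self_mul_conjTranspose X).isHermitian
  show sortedDesc hA.eigenvalues i ≤ sortedDesc (singVals X) i
  set d := sortedDesc (hA.eigenvalues) i with hd
  set s := sortedDesc (singVals X) i with hs
  set σA := Tuple.sort hA.eigenvalues with hσA
  set σB := Tuple.sort (singVals X) with hσB
  have hs0 : 0 ≤ s := Real.sqrt_nonneg _
  set JA := (Finset.Ici i.rev).image σA with hJAdef
  set JB := (Finset.Iic i.rev).image σB with hJBdef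
  have hJA : ∀ j ∈ JA, d ≤ hA.eigenvalues j := by
    intro j hj
    obtain ⟨k, hk, rfl⟩ := Finset.mem_image.1 hj
    exact Tuple.monotone_sort hA.eigenvalues (Finset.mem_Ici.1 hk)
  have hJB : ∀ j ∈ JB, hB.eigenvalues j ≤ s ^ 2 := by
    intro j hj
    obtain ⟨k, hk, rfl⟩ := Finset.mem_image.1 hj
    have h1 : singVals X (σB k) ≤ s :=
      Tuple.monotone_sort (singVals X) (Finset.mem_Iic.1 hk)
    have h2 : hB.eigenvalues (σB k) = (singVals X (σB k)) ^ 2 := by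
      rw [singVals, Real.sq_sqrt
        ((Matrix.posSemidef_self_mul_conjTranspose X).eigenvalues_nonneg _)]
    rw [h2]
    exact pow_le_pow_left₀ (Real.sqrt_nonneg _) h1 2
  have hcardA : JA.card = i.val + 1 := by
    rw [hJAdef, Finset.card_image_of_injective _ σA.injective, Fin.card_Ici]
    have := i.isLt; simp [Fin.rev]; omega
  have hcardB : JB.card = n - i.val := by
    rw [hJBdef, Finset.card_image_of_injective _ σB.injective, Fin.card_Iic]
    have := i.isLt; simp [Fin.rev]; omega
  set SA := Submodule.span ℂ (⇑hA.eigenvectorBasis '' ↑JA) with hSA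
  set SB := Submodule.span ℂ (⇑hB.eigenvectorBasis '' ↑JB) with hSB
  have hfA : Module.finrank ℂ SA = i.val + 1 := by rw [hSA, finrank_span_eigen]; exact hcardA
  have hfB : Module.finrank ℂ SB = n - i.val := by rw [hSB, finrank_span_eigen]; exact hcardB
  have hsup : Module.finrank ℂ ↥(SA ⊔ SB) ≤ n := by
    have := Submodule.finrank_le (SA ⊔ SB)
    rwa [finrank_euclideanSpace, Fintype.card_fin] at this
  have hinf : 0 < Module.finrank ℂ ↥(SA ⊓ SB) := by
    have heq := Submodule.finrank_sup_add_finrank_inf_eq SA SB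
    rw [hfA, hfB] at heq
    have := i.isLt
    omega
  have hne : SA ⊓ SB ≠ ⊥ := by
    intro h
    rw [h, finrank_bot] at hinf
    exact lt_irrefl 0 hinf
  obtain ⟨x, hx, hx0⟩ := Submodule.exists_mem_ne_zero_of_ne_bot hne
  have hxA : x ∈ SA := hx.1
  have hxB : x ∈ SB := hx.2
  have hxn : (0:ℝ) < ‖x‖ := norm_pos_iff.2 hx0
  set u : Fin n → ℂ := ⇑x with hu
  set z : EuclideanSpace ℂ (Fin n) := (WithLp.equiv 2 (Fin n → ℂ)).symm (Xᴴ *ᵥ u) with hz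
  -- key1
  have key1 : d * ‖x‖ ^ 2 ≤
      Complex.re ⟪x, (WithLp.equiv 2 (Fin n → ℂ)).symm (matRe X *ᵥ u)⟫_ℂ := by
    rw [quadForm hA x, Complex.ofReal_re]
    exact sum_lower hA JA d hJA x hxA
  -- key2
  have hp : ⟪z, x⟫_ℂ = star u ⬝ᵥ (X *ᵥ u) := by
    rw [EuclideanSpace.inner_eq_star_dotProduct]
    rw [dotProduct_comm x.ofLp]
    show star (Xᴴ *ᵥ u) ⬝ᵥ u = _
    rw [star_mulVec, conjTranspose_conjTranspose, ← dotProduct_mulVec]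
  have key2 : Complex.re ⟪x, (WithLp.equiv 2 (Fin n → ℂ)).symm (matRe X *ᵥ u)⟫_ℂ
      ≤ ‖z‖ * ‖x‖ := by
    have hq : star u ⬝ᵥ (Xᴴ *ᵥ u) = starRingEnd ℂ (star u ⬝ᵥ (X *ᵥ u)) := by
      have : starRingEnd ℂ (star u ⬝ᵥ (X *ᵥ u)) = star (star u ⬝ᵥ (X *ᵥ u)) := rfl
      rw [this, star_dotProduct, star_mulVec, conjTranspose_conjTranspose,
        ← dotProduct_mulVec]
    have hexp : ⟪x, (WithLp.equiv 2 (Fin n → ℂ)).symm (matRe X *ᵥ u)⟫_ℂ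
        = (2⁻¹ : ℂ) * (star u ⬝ᵥ (X *ᵥ u) + star u ⬝ᵥ (Xᴴ *ᵥ u)) := by
      rw [EuclideanSpace.inner_eq_star_dotProduct]
      rw [dotProduct_comm _ (star x.ofLp)]
      show star u ⬝ᵥ (matRe X *ᵥ u) = _
      rw [matRe, smul_mulVec, add_mulVec, dotProduct_smul, dotProduct_add]
      simp [smul_eq_mul]
    rw [hexp, hq, ← hp]
    have : Complex.re ((2⁻¹ : ℂ) * (⟪z, x⟫_ℂ + starRingEnd ℂ ⟪z, x⟫_ℂ)) =
        Complex.re ⟪z, x⟫_ℂ := by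
      simp [Complex.add_re, Complex.conj_re, Complex.mul_re]
      rw [← inner_conj_symm x z, Complex.conj_re]
      ring
    rw [this]
    calc Complex.re ⟪z, x⟫_ℂ ≤ ‖⟪z, x⟫_ℂ‖ := Complex.re_le_norm _
      _ ≤ ‖z‖ * ‖x‖ := norm_inner_le_norm z x
  -- key3
  have key3 : ‖z‖ ^ 2 ≤ s ^ 2 * ‖x‖ ^ 2 := by
    have hzz : ⟪x, (WithLp.equiv 2 (Fin n → ℂ)).symm ((X * Xᴴ) *ᵥ u)⟫_ℂ = ⟪z, z⟫_ℂ := by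
      rw [EuclideanSpace.inner_eq_star_dotProduct, EuclideanSpace.inner_eq_star_dotProduct]
      rw [dotProduct_comm _ (star x.ofLp), dotProduct_comm z.ofLp]
      show star u ⬝ᵥ ((X * Xᴴ) *ᵥ u) = star (Xᴴ *ᵥ u) ⬝ᵥ (Xᴴ *ᵥ u)
      rw [star_mulVec, conjTranspose_conjTranspose, ← dotProduct_mulVec, mulVec_mulVec]
    have := sum_upper hB JB (s ^ 2) hJB x hxB
    have h2 : Complex.re ⟪x, (WithLp.equiv 2 (Fin n → ℂ)).symm ((X * Xᴴ) *ᵥ u)⟫_ℂ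
        = ∑ j, hB.eigenvalues j * ‖hB.eigenvectorBasis.repr x j‖ ^ 2 := by
      rw [quadForm hB x, Complex.ofReal_re]
    have h3 : ‖z‖ ^ 2 = Complex.re ⟪x, (WithLp.equiv 2 (Fin n → ℂ)).symm ((X * Xᴴ) *ᵥ u)⟫_ℂ := by
      rw [hzz]; exact (inner_self_eq_norm_sq (𝕜 := ℂ) z).symm
    rw [h3, h2]; exact this
  have hzle : ‖z‖ ≤ s * ‖x‖ := by
    nlinarith [key3, hs0, norm_nonneg z, norm_nonneg x, mul_nonneg hs0 (norm_nonneg x)]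
  have final : d * ‖x‖ ^ 2 ≤ s * ‖x‖ ^ 2 := by
    calc d * ‖x‖ ^ 2 ≤ Complex.re ⟪x, (WithLp.equiv 2 (Fin n → ℂ)).symm (matRe X *ᵥ u)⟫_ℂ :=
          key1
      _ ≤ ‖z‖ * ‖x‖ := key2
      _ ≤ s * ‖x‖ * ‖x‖ := mul_le_mul_of_nonneg_right hzle (norm_nonneg x)
      _ = s * ‖x‖ ^ 2 := by ring
  exact le_of_mul_le_mul_right final (pow_pos hxn 2)
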